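/- Let A ≥ 1, A_J > 0, T ≥ 0, let m' be a real number with m' ≤ (16π)^(−1/2) A^(1/2), and let 0 ≤ β ≤ log(1 + (A_J/A) e^(−T)). Then ∫_T^(T+β) e^(3t/2) A^(3/2) ( 4 e^t A + 16π − e^(−t/2) A^(−1/2) (16π)^(3/2) m' )^(−1/2) dt ≤ (1/2) A_J. -/

import Mathlib

/-!
For `t ≥ 0` the hypothesis on `m'` makes the mass term at most `16π`, so the expression under
the root is at least `4 eᵗ A` and the integrand is at most `A eᵗ / 2`. Integrating gives
`(A / 2) (e^(T+β) - e^T)`, and the bound on `β` says exactly that `e^(T+β) - e^T ≤ A_J / A`.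
-/

open Real MeasureTheory

theorem intervalIntegral.integral_mono_on_of_nonneg {μ : Measure ℝ} {f g : ℝ → ℝ} {a b : ℝ}
    (hab : a ≤ b) (hg : IntervalIntegrable g μ a b) (hf : ∀ x ∈ Set.Icc a b, 0 ≤ f x)
    (hfg : ∀ x ∈ Set.Icc a b, f x ≤ g x) : ∫ x in a..b, f x ∂μ ≤ ∫ x in a..b, g x ∂μ := by
  rw [intervalIntegral.integral_of_le hab, intervalIntegral.integral_of_le hab]
  have hIoc : ∀ᵐ x ∂μ.restrict (Set.Ioc a b), x ∈ Set.Icc a b :=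
    (ae_restrict_mem measurableSet_Ioc).mono fun _ hx ↦ Set.Ioc_subset_Icc_self hx
  exact integral_mono_of_nonneg (hIoc.mono hf) hg.1 (hIoc.mono hfg)

lemma rpow_three_halves_mul_rpow_neg_half_four_mul {u : ℝ} (hu : 0 < u) :
    u ^ ((3:ℝ)/2) * (4 * u) ^ (-(1:ℝ)/2) = u / 2 := by
  have hfour : (4:ℝ) ^ (-(1:ℝ)/2) = 1/2 := by
    rw [show (4:ℝ) = 2 ^ (2:ℝ) by norm_num, ← rpow_mul zero_le_two]
    norm_num
  rw [mul_rpow zero_le_four hu.le, hfour, mul_left_comm, ← rpow_add hu]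
  norm_num
  ring

lemma mass_term_le {c A m' t : ℝ} (hc : 0 < c) (hA : 0 < A) (ht : 0 ≤ t)
    (hm' : m' ≤ c ^ (-(1:ℝ)/2) * A ^ ((1:ℝ)/2)) :
    exp (-t / 2) * A ^ (-(1:ℝ)/2) * c ^ ((3:ℝ)/2) * m' ≤ c := by
  calc exp (-t / 2) * A ^ (-(1:ℝ)/2) * c ^ ((3:ℝ)/2) * m'
      ≤ exp (-t / 2) * A ^ (-(1:ℝ)/2) * c ^ ((3:ℝ)/2) * (c ^ (-(1:ℝ)/2) * A ^ ((1:ℝ)/2)) := by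
        gcongr
    _ = exp (-t / 2) * (A ^ (-(1:ℝ)/2) * A ^ ((1:ℝ)/2)) * (c ^ ((3:ℝ)/2) * c ^ (-(1:ℝ)/2)) := by
        ring
    _ = exp (-t / 2) * c := by
        rw [← rpow_add hA, ← rpow_add hc]
        norm_num
    _ ≤ c := mul_le_of_le_one_left hc.le (exp_le_one_iff.mpr (by linarith))

lemma exp_mul_rpow_neg_half_le {A D t : ℝ} (hA : 0 < A) (hD : 4 * exp t * A ≤ D) :
    exp (3 * t / 2) * A ^ ((3:ℝ)/2) * D ^ (-(1:ℝ)/2) ≤ 1/2 * A * exp t := by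
  have hu : 0 < exp t * A := by positivity
  calc exp (3 * t / 2) * A ^ ((3:ℝ)/2) * D ^ (-(1:ℝ)/2)
      = (exp t * A) ^ ((3:ℝ)/2) * D ^ (-(1:ℝ)/2) := by
        rw [mul_rpow (exp_pos t).le hA.le, ← exp_mul]
        ring_nf
    _ ≤ (exp t * A) ^ ((3:ℝ)/2) * (4 * (exp t * A)) ^ (-(1:ℝ)/2) := by
        rw [← mul_assoc]
        exact mul_le_mul_of_nonneg_left
          (rpow_le_rpow_of_nonpos (by positivity) hD (by norm_num)) (by positivity)
    _ = 1/2 * A * exp t := by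
        rw [rpow_three_halves_mul_rpow_neg_half_four_mul hu]
        ring

lemma exp_add_sub_exp_le_of_le_log {T β a : ℝ} (ha : 0 ≤ a)
    (hβ : β ≤ log (1 + a * exp (-T))) : exp (T + β) - exp T ≤ a := by
  have hexp : exp β ≤ 1 + a * exp (-T) := (le_log_iff_exp_le (by positivity)).mp hβ
  calc exp (T + β) - exp T = exp T * exp β - exp T := by rw [exp_add]
    _ ≤ exp T * (1 + a * exp (-T)) - exp T := by gcongr
    _ = a := by rw [exp_neg]; field_simp; ring

theorem jump_volume_bound (A A_J T β m' : ℝ) (hA : 1 ≤ A) (hAJ : 0 < A_J)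
    (hT : 0 ≤ T) (hm' : m' ≤ (16 * π) ^ (-(1:ℝ)/2) * A ^ ((1:ℝ)/2))
    (hβ0 : 0 ≤ β) (hβ : β ≤ Real.log (1 + A_J / A * Real.exp (-T))) :
    (∫ t in T..(T + β),
        Real.exp (3 * t / 2) * A ^ ((3:ℝ)/2) *
          (4 * Real.exp t * A + 16 * π
            - Real.exp (-t / 2) * A ^ (-(1:ℝ)/2) * (16 * π) ^ ((3:ℝ)/2) * m') ^ (-(1:ℝ)/2))
      ≤ (1 / 2) * A_J := by
  have hA0 : 0 < A := by linarith
  have hdenom : ∀ t ∈ Set.Icc T (T + β), 4 * exp t * A ≤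
      4 * exp t * A + 16 * π - exp (-t / 2) * A ^ (-(1:ℝ)/2) * (16 * π) ^ ((3:ℝ)/2) * m' :=
    fun t ht ↦ by linarith [mass_term_le (by positivity) hA0 (hT.trans ht.1) hm']
  calc _ ≤ ∫ t in T..(T + β), 1/2 * A * exp t := by
        refine intervalIntegral.integral_mono_on_of_nonneg (by linarith)
          ((continuous_const.mul continuous_exp).intervalIntegrable _ _)
          (fun t ht ↦ mul_nonneg (by positivity)
            (rpow_nonneg ((by positivity : (0:ℝ) ≤ 4 * exp t * A).trans (hdenom t ht)) _))
          (fun t ht ↦ exp_mul_rpow_neg_half_le hA0 (hdenom t ht))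
    _ = 1/2 * A * (exp (T + β) - exp T) := by
        rw [intervalIntegral.integral_const_mul, integral_exp]
    _ ≤ 1/2 * A * (A_J / A) := by
        gcongr
        exact exp_add_sub_exp_le_of_le_log (by positivity) hβ
    _ = 1/2 * A_J := by field_simp
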